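/- arXiv:1402.5621 — 2 statements merged into one kernel-verified Lean document; each statement's English description precedes it below -/
import Mathlib

section
/- Let G be a simple bipartite graph with e edges. Then ρ(G) ≤ sqrt(e), with equality if and only if G is a disjoint union of a complete bipartite graph and isolated vertices. -/
noncomputable def specRad {V : Type*} [Fintype V] (G : SimpleGraph V) : ℝ :=
  letI := Classical.decEq V
  letI := Classical.decRel G.Adj
  sSup (spectrum ℝ (G.adjMatrix ℝ))

/-!
Let `A` be the adjacency matrix, `e` the number of edges, `(s, t)` a bipartition and `v` an
eigenvector for an eigenvalue `μ`, with `N = v ⬝ᵥ v`. Summing `(v x * v y - α) ^ 2 ≥ 0` over the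
ordered adjacent pairs `(x, y)` with `α = N / (2 √e)` gives
  `N / √e * (√e * N - v ⬝ᵥ A v) = ∑ (v x * v y - α) ^ 2 + (N ^ 2 / 2 - ∑ (v x * v y) ^ 2)`,
and bipartiteness gives `∑ (v x * v y) ^ 2 ≤ 2 (∑_s v ^ 2) (∑_t v ^ 2) ≤ N ^ 2 / 2`.
Hence `μ * N = v ⬝ᵥ A v ≤ √e * N`. If `μ = √e` both terms vanish: `v x * v y = α > 0` on every
edge, and every pair of `s × t` on which `v` does not vanish is an edge, so `G` is complete
bipartite between the supports of `v` in `s` and in `t`. Conversely, the complete bipartite graph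
with parts of sizes `a` and `b` has the eigenvector equal to `√b` on one part and `√a` on the other,
with eigenvalue `√(a b)`.
-/

open Finset Matrix

theorem Matrix.mem_spectrum_iff_exists_mulVec_eq_smul {K n : Type*} [Field K] [Fintype n]
    [DecidableEq n] {A : Matrix n n K} {μ : K} :
    μ ∈ spectrum K A ↔ ∃ v ≠ 0, A *ᵥ v = μ • v := by
  rw [← spectrum_toLin', ← Module.End.hasEigenvalue_iff_mem_spectrum,
    Module.End.hasEigenvalue_iff, Submodule.ne_bot_iff]
  simp only [Module.End.mem_eigenspace_iff, toLin'_apply]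
  exact ⟨fun ⟨v, hv, h0⟩ => ⟨v, h0, hv⟩, fun ⟨v, h0, hv⟩ => ⟨v, hv, h0⟩⟩

theorem Finset.sum_sum_mul_sq_add_sum_sum_mul_sq_le {ι : Type*} [Fintype ι] [DecidableEq ι]
    {s t : Finset ι} (hst : Disjoint s t) (v : ι → ℝ) :
    ∑ x ∈ s, ∑ y ∈ t, (v x * v y) ^ 2 + ∑ x ∈ t, ∑ y ∈ s, (v x * v y) ^ 2 ≤ (v ⬝ᵥ v) ^ 2 / 2 := by
  have hs : 0 ≤ ∑ x ∈ s, v x ^ 2 := sum_nonneg fun x _ => sq_nonneg _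
  have ht : 0 ≤ ∑ x ∈ t, v x ^ 2 := sum_nonneg fun x _ => sq_nonneg _
  have hst_le : ∑ x ∈ s, v x ^ 2 + ∑ x ∈ t, v x ^ 2 ≤ v ⬝ᵥ v := by
    rw [← sum_union hst]
    simpa [dotProduct, sq] using
      sum_le_sum_of_subset_of_nonneg (subset_univ (s ∪ t)) fun x _ _ => sq_nonneg (v x)
  simp only [mul_pow, ← sum_mul_sum]
  nlinarith [sq_nonneg (∑ x ∈ s, v x ^ 2 - ∑ x ∈ t, v x ^ 2)]

theorem Matrix.dotProduct_self_pos {ι : Type*} [Fintype ι] {v : ι → ℝ} (hv : v ≠ 0) :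
    0 < v ⬝ᵥ v := by
  simpa using dotProduct_star_self_pos_iff.mpr hv

namespace SimpleGraph

theorem isBipartiteWith_of_adj_iff {V : Type*} {G : SimpleGraph V} {s t : Set V}
    (hst : Disjoint s t) (hadj : ∀ x y, G.Adj x y ↔ x ∈ s ∧ y ∈ t ∨ x ∈ t ∧ y ∈ s) :
    G.IsBipartiteWith s t :=
  ⟨hst, fun x y hxy => (hadj x y).mp hxy⟩

variable {V : Type*} [Fintype V] {G : SimpleGraph V} [DecidableRel G.Adj]

theorem specRad_eq_sSup [DecidableEq V] : specRad G = sSup (spectrum ℝ (G.adjMatrix ℝ)) := by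
  unfold specRad
  congr!

theorem dotProduct_adjMatrix_mulVec (v : V → ℝ) :
    v ⬝ᵥ (G.adjMatrix ℝ *ᵥ v) = ∑ x, ∑ y ∈ G.neighborFinset x, v x * v y := by
  simp only [dotProduct, adjMatrix_mulVec_apply, mul_sum]

theorem sum_sum_neighborFinset_const (c : ℝ) :
    ∑ x, ∑ _y ∈ G.neighborFinset x, c = 2 * #G.edgeFinset * c := by
  simp only [sum_const, card_neighborFinset_eq_degree, nsmul_eq_mul, ← sum_mul]
  rw [← Nat.cast_sum, sum_degrees_eq_twice_card_edges]
  push_cast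
  ring

theorem sum_sum_neighborFinset_sub_sq (v : V → ℝ) (α : ℝ) :
    ∑ x, ∑ y ∈ G.neighborFinset x, (v x * v y - α) ^ 2 =
      ∑ x, ∑ y ∈ G.neighborFinset x, (v x * v y) ^ 2 - 2 * α * (v ⬝ᵥ (G.adjMatrix ℝ *ᵥ v)) +
        2 * #G.edgeFinset * α ^ 2 := by
  rw [dotProduct_adjMatrix_mulVec, ← sum_sum_neighborFinset_const, mul_sum]
  simp only [mul_sum, ← sum_sub_distrib, ← sum_add_distrib]
  exact sum_congr rfl fun x _ => sum_congr rfl fun y _ => by ring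

variable {s t : Finset V}

theorem IsBipartiteWith.sum_sum_neighborFinset_eq [DecidableEq V]
    (h : G.IsBipartiteWith s t) (f : V → V → ℝ) :
    ∑ x, ∑ y ∈ G.neighborFinset x, f x y =
      ∑ x ∈ s, ∑ y ∈ G.neighborFinset x, f x y + ∑ x ∈ t, ∑ y ∈ G.neighborFinset x, f x y := by
  rw [← sum_union (disjoint_coe.mp h.disjoint)]
  refine (sum_subset (subset_univ _) fun x _ hx => ?_).symm
  have : G.neighborFinset x = ∅ := by
    refine eq_empty_of_forall_notMem fun y hy => hx ?_
    rcases h.mem_of_adj ((mem_neighborFinset _ _ _).mp hy) with ⟨hxs, -⟩ | ⟨hxt, -⟩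
    exacts [mem_union_left _ hxs, mem_union_right _ hxt]
  rw [this, sum_empty]

theorem IsBipartiteWith.sum_sum_neighborFinset_le [DecidableEq V]
    (h : G.IsBipartiteWith s t) {f : V → V → ℝ} (hf : ∀ x y, 0 ≤ f x y) :
    ∑ x, ∑ y ∈ G.neighborFinset x, f x y ≤
      ∑ x ∈ s, ∑ y ∈ t, f x y + ∑ x ∈ t, ∑ y ∈ s, f x y := by
  rw [h.sum_sum_neighborFinset_eq]
  gcongr with x hx x hx
  · exact fun y _ _ => hf x y
  · exact isBipartiteWith_neighborFinset_subset h hx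
  · exact fun y _ _ => hf x y
  · exact isBipartiteWith_neighborFinset_subset' h hx

theorem IsBipartiteWith.sum_sum_neighborFinset_lt [DecidableEq V]
    (h : G.IsBipartiteWith s t) {f : V → V → ℝ} (hf : ∀ x y, 0 ≤ f x y) {a b : V}
    (ha : a ∈ s) (hb : b ∈ t) (hab : ¬ G.Adj a b) (hpos : 0 < f a b) :
    ∑ x, ∑ y ∈ G.neighborFinset x, f x y <
      ∑ x ∈ s, ∑ y ∈ t, f x y + ∑ x ∈ t, ∑ y ∈ s, f x y := by
  rw [h.sum_sum_neighborFinset_eq]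
  refine add_lt_add_of_lt_of_le (sum_lt_sum (fun x hx => ?_) ⟨a, ha, ?_⟩)
    (sum_le_sum fun x hx => ?_)
  · exact sum_le_sum_of_subset_of_nonneg (isBipartiteWith_neighborFinset_subset h hx)
      fun y _ _ => hf x y
  · exact sum_lt_sum_of_subset (isBipartiteWith_neighborFinset_subset h ha)
      hb (by simpa using hab) hpos fun y _ _ => hf a y
  · exact sum_le_sum_of_subset_of_nonneg (isBipartiteWith_neighborFinset_subset' h hx)
      fun y _ _ => hf x y

theorem div_sqrt_mul_sqrt_mul_sub_dotProduct_adjMatrix_mulVec_eq (he : #G.edgeFinset ≠ 0)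
    (v : V → ℝ) :
    (v ⬝ᵥ v) / √(#G.edgeFinset : ℝ) *
        (√(#G.edgeFinset : ℝ) * (v ⬝ᵥ v) - v ⬝ᵥ (G.adjMatrix ℝ *ᵥ v)) =
      ∑ x, ∑ y ∈ G.neighborFinset x, (v x * v y - (v ⬝ᵥ v) / (2 * √(#G.edgeFinset : ℝ))) ^ 2 +
        ((v ⬝ᵥ v) ^ 2 / 2 - ∑ x, ∑ y ∈ G.neighborFinset x, (v x * v y) ^ 2) := by
  rw [sum_sum_neighborFinset_sub_sq]
  set e : ℝ := (#G.edgeFinset : ℝ)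
  have hre : e = √e ^ 2 := (Real.sq_sqrt (by positivity)).symm
  -- abstract `√e`, so that rewriting with `hre` does not reach inside it
  set r := √e
  have hr : 0 < r := Real.sqrt_pos.mpr (by positivity)
  rw [hre]
  field_simp
  ring

theorem IsBipartiteWith.sum_sum_neighborFinset_sq_le [DecidableEq V]
    (h : G.IsBipartiteWith s t) (v : V → ℝ) :
    ∑ x, ∑ y ∈ G.neighborFinset x, (v x * v y) ^ 2 ≤ (v ⬝ᵥ v) ^ 2 / 2 :=
  (h.sum_sum_neighborFinset_le fun _ _ => sq_nonneg _).trans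
    (sum_sum_mul_sq_add_sum_sum_mul_sq_le (disjoint_coe.mp h.disjoint) v)

theorem IsBipartiteWith.dotProduct_adjMatrix_mulVec_le [DecidableEq V]
    (h : G.IsBipartiteWith s t) (v : V → ℝ) :
    v ⬝ᵥ (G.adjMatrix ℝ *ᵥ v) ≤ √(#G.edgeFinset : ℝ) * (v ⬝ᵥ v) := by
  rcases eq_or_ne #G.edgeFinset 0 with he | he
  · have hbot : ∀ x y, ¬ G.Adj x y := fun x y hxy =>
      card_ne_zero_of_mem (G.mem_edgeFinset.mpr (G.mem_edgeSet.mpr hxy)) he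
    simp [dotProduct_adjMatrix_mulVec, neighborFinset_eq_filter, hbot, he]
  rcases eq_or_ne v 0 with rfl | hv
  · simp
  have key := div_sqrt_mul_sqrt_mul_sub_dotProduct_adjMatrix_mulVec_eq he v
  have hD : 0 ≤ ∑ x, ∑ y ∈ G.neighborFinset x,
      (v x * v y - (v ⬝ᵥ v) / (2 * √(#G.edgeFinset : ℝ))) ^ 2 :=
    sum_nonneg fun x _ => sum_nonneg fun y _ => sq_nonneg _
  have hZ := h.sum_sum_neighborFinset_sq_le v
  have hpos : 0 < (v ⬝ᵥ v) / √(#G.edgeFinset : ℝ) :=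
    div_pos (dotProduct_self_pos hv) (Real.sqrt_pos.mpr (by positivity))
  have : 0 ≤ √(#G.edgeFinset : ℝ) * (v ⬝ᵥ v) - v ⬝ᵥ (G.adjMatrix ℝ *ᵥ v) :=
    (mul_nonneg_iff_of_pos_left hpos).mp (by rw [key]; linarith)
  linarith

theorem IsBipartiteWith.adj_iff_of_dotProduct_adjMatrix_mulVec_eq [DecidableEq V]
    (h : G.IsBipartiteWith s t) (he : #G.edgeFinset ≠ 0) {v : V → ℝ} (hv : v ≠ 0)
    (heq : v ⬝ᵥ (G.adjMatrix ℝ *ᵥ v) = √(#G.edgeFinset : ℝ) * (v ⬝ᵥ v)) (x y : V) :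
    G.Adj x y ↔ x ∈ {a ∈ s | v a ≠ 0} ∧ y ∈ {b ∈ t | v b ≠ 0} ∨
      x ∈ {b ∈ t | v b ≠ 0} ∧ y ∈ {a ∈ s | v a ≠ 0} := by
  set α := (v ⬝ᵥ v) / (2 * √(#G.edgeFinset : ℝ))
  have hα : 0 < α := div_pos (dotProduct_self_pos hv) (by positivity)
  have key := div_sqrt_mul_sqrt_mul_sub_dotProduct_adjMatrix_mulVec_eq he v
  rw [heq, sub_self, mul_zero] at key
  have hD : 0 ≤ ∑ x, ∑ y ∈ G.neighborFinset x, (v x * v y - α) ^ 2 :=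
    sum_nonneg fun x _ => sum_nonneg fun y _ => sq_nonneg _
  have hZ := h.sum_sum_neighborFinset_sq_le v
  have hedge : ∀ a b, G.Adj a b → v a * v b = α := by
    intro a b hab
    have hD0 : ∑ x, ∑ y ∈ G.neighborFinset x, (v x * v y - α) ^ 2 = 0 := by linarith
    rw [sum_eq_zero_iff_of_nonneg fun x _ => sum_nonneg fun y _ => sq_nonneg _] at hD0
    have := (sum_eq_zero_iff_of_nonneg fun y _ => sq_nonneg _).mp (hD0 a (mem_univ a)) b
      ((mem_neighborFinset _ _ _).mpr hab)
    exact sub_eq_zero.mp (pow_eq_zero_iff two_ne_zero |>.mp this)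
  have hcomplete : ∀ a ∈ s, ∀ b ∈ t, v a ≠ 0 → v b ≠ 0 → G.Adj a b := by
    intro a ha b hb hva hvb
    by_contra hab
    have := h.sum_sum_neighborFinset_lt (fun x y => sq_nonneg (v x * v y)) ha hb hab
      (by positivity)
    linarith [sum_sum_mul_sq_add_sum_sum_mul_sq_le (disjoint_coe.mp h.disjoint) v]
  simp only [mem_filter]
  constructor
  · intro hxy
    have hx : v x ≠ 0 := left_ne_zero_of_mul (hedge x y hxy ▸ hα.ne')
    have hy : v y ≠ 0 := right_ne_zero_of_mul (hedge x y hxy ▸ hα.ne')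
    rcases h.mem_of_adj hxy with ⟨hxs, hyt⟩ | ⟨hxt, hys⟩
    · exact Or.inl ⟨⟨hxs, hx⟩, hyt, hy⟩
    · exact Or.inr ⟨⟨hxt, hx⟩, hys, hy⟩
  · rintro (⟨⟨hxs, hx⟩, hyt, hy⟩ | ⟨⟨hxt, hx⟩, hys, hy⟩)
    · exact hcomplete x hxs y hyt hx hy
    · exact (hcomplete y hys x hxt hy hx).symm

theorem IsBipartiteWith.le_sqrt_of_mem_spectrum [DecidableEq V] (h : G.IsBipartiteWith s t)
    {μ : ℝ} (hμ : μ ∈ spectrum ℝ (G.adjMatrix ℝ)) : μ ≤ √(#G.edgeFinset : ℝ) := by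
  obtain ⟨v, hv, hAv⟩ := mem_spectrum_iff_exists_mulVec_eq_smul.mp hμ
  have := h.dotProduct_adjMatrix_mulVec_le v
  rw [hAv, dotProduct_smul, smul_eq_mul] at this
  exact le_of_mul_le_mul_right this (dotProduct_self_pos hv)

theorem IsBipartiteWith.specRad_le (h : G.IsBipartiteWith s t) :
    specRad G ≤ √(#G.edgeFinset : ℝ) := by
  classical
  rw [specRad_eq_sSup]
  exact Real.sSup_le (fun μ hμ => h.le_sqrt_of_mem_spectrum hμ) (Real.sqrt_nonneg _)

theorem IsBipartiteWith.exists_adj_iff_of_specRad_eq (h : G.IsBipartiteWith s t)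
    (heq : specRad G = √(#G.edgeFinset : ℝ)) :
    ∃ s' t' : Finset V, Disjoint s' t' ∧
      ∀ x y, G.Adj x y ↔ x ∈ s' ∧ y ∈ t' ∨ x ∈ t' ∧ y ∈ s' := by
  classical
  rcases eq_or_ne #G.edgeFinset 0 with he | he
  · refine ⟨∅, ∅, disjoint_empty_left _, fun x y => ?_⟩
    simp [edgeFinset_eq_empty.mp (card_eq_zero.mp he)]
  obtain ⟨a, -, -⟩ := ne_bot_iff_exists_adj.mp (edgeFinset_nonempty.mp (card_ne_zero.mp he))
  have hmem : √(#G.edgeFinset : ℝ) ∈ spectrum ℝ (G.adjMatrix ℝ) := by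
    rw [← heq, specRad_eq_sSup]
    exact Set.Nonempty.csSup_mem
      ⟨_, (G.isHermitian_adjMatrix ℝ).eigenvalues_mem_spectrum_real a⟩ finite_real_spectrum
  obtain ⟨v, hv, hAv⟩ := mem_spectrum_iff_exists_mulVec_eq_smul.mp hmem
  refine ⟨{a ∈ s | v a ≠ 0}, {b ∈ t | v b ≠ 0},
    disjoint_filter_filter (disjoint_coe.mp h.disjoint),
    h.adj_iff_of_dotProduct_adjMatrix_mulVec_eq he hv ?_⟩
  rw [hAv, dotProduct_smul, smul_eq_mul]

theorem specRad_bot : specRad (⊥ : SimpleGraph V) = 0 := by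
  classical
  have hspec : ∀ μ ∈ spectrum ℝ ((⊥ : SimpleGraph V).adjMatrix ℝ), μ = 0 := by
    intro μ hμ
    obtain ⟨v, hv, hAv⟩ := mem_spectrum_iff_exists_mulVec_eq_smul.mp hμ
    rw [adjMatrix_bot, zero_mulVec, eq_comm, smul_eq_zero] at hAv
    exact hAv.resolve_right hv
  rw [specRad_eq_sSup]
  exact le_antisymm (Real.sSup_nonpos fun μ hμ => (hspec μ hμ).le)
    (Real.sSup_nonneg fun μ hμ => (hspec μ hμ).ge)

theorem neighborFinset_eq_of_adj_iff (hst : Disjoint s t)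
    (hadj : ∀ x y, G.Adj x y ↔ x ∈ s ∧ y ∈ t ∨ x ∈ t ∧ y ∈ s) {x : V} (hx : x ∈ s) :
    G.neighborFinset x = t := by
  ext y
  simp [hadj, hx, Finset.disjoint_left.mp hst hx]

theorem card_edgeFinset_eq_of_adj_iff (hst : Disjoint s t)
    (hadj : ∀ x y, G.Adj x y ↔ x ∈ s ∧ y ∈ t ∨ x ∈ t ∧ y ∈ s) : #G.edgeFinset = #s * #t := by
  rw [← isBipartiteWith_sum_degrees_eq_card_edges
    (isBipartiteWith_of_adj_iff (disjoint_coe.mpr hst) hadj)]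
  exact sum_const_nat fun x hx => by
    rw [← card_neighborFinset_eq_degree, neighborFinset_eq_of_adj_iff hst hadj hx]

theorem sqrt_card_mul_card_mem_spectrum_of_adj_iff [DecidableEq V] (hst : Disjoint s t)
    (hadj : ∀ x y, G.Adj x y ↔ x ∈ s ∧ y ∈ t ∨ x ∈ t ∧ y ∈ s) (hs : s.Nonempty) (ht : t.Nonempty) :
    √((#s : ℝ) * #t) ∈ spectrum ℝ (G.adjMatrix ℝ) := by
  set v : V → ℝ := fun x => if x ∈ s then √(#t : ℝ) else if x ∈ t then √(#s : ℝ) else 0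
  refine mem_spectrum_iff_exists_mulVec_eq_smul.mpr ⟨v, fun h0 => ?_, ?_⟩
  · obtain ⟨a, ha⟩ := hs
    simpa [v, ha, ht.card_pos.ne'] using congrFun h0 a
  ext x
  simp only [v, adjMatrix_mulVec_apply, Pi.smul_apply, smul_eq_mul]
  rw [Real.sqrt_mul (Nat.cast_nonneg _)]
  by_cases hxs : x ∈ s
  · rw [neighborFinset_eq_of_adj_iff hst hadj hxs,
      sum_congr rfl fun y hy => by rw [if_neg (disjoint_right.mp hst hy), if_pos hy],
      sum_const, nsmul_eq_mul, if_pos hxs, mul_assoc, Real.mul_self_sqrt (Nat.cast_nonneg _)]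
    ring
  by_cases hxt : x ∈ t
  · rw [neighborFinset_eq_of_adj_iff hst.symm (fun a b => (hadj a b).trans or_comm) hxt,
      sum_congr rfl fun y hy => if_pos hy, sum_const, nsmul_eq_mul, if_neg hxs, if_pos hxt,
      mul_comm √_ √_, mul_assoc, Real.mul_self_sqrt (Nat.cast_nonneg _)]
    ring
  · have : G.neighborFinset x = ∅ := by
      ext y
      simp [hadj, hxs, hxt]
    simp [this, hxs, hxt]

theorem specRad_eq_sqrt_of_adj_iff [DecidableEq V] (hst : Disjoint s t)
    (hadj : ∀ x y, G.Adj x y ↔ x ∈ s ∧ y ∈ t ∨ x ∈ t ∧ y ∈ s) :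
    specRad G = √(#G.edgeFinset : ℝ) := by
  rcases eq_or_ne #G.edgeFinset 0 with he | he
  · obtain rfl := edgeFinset_eq_empty.mp (card_eq_zero.mp he)
    rw [specRad_bot, he, Nat.cast_zero, Real.sqrt_zero]
  have hcard := card_edgeFinset_eq_of_adj_iff hst hadj
  obtain ⟨hs, ht⟩ := mul_ne_zero_iff.mp (hcard ▸ he)
  have hmem := sqrt_card_mul_card_mem_spectrum_of_adj_iff hst hadj
    (card_ne_zero.mp hs) (card_ne_zero.mp ht)
  rw [← Nat.cast_mul, ← hcard] at hmem
  refine le_antisymm (isBipartiteWith_of_adj_iff (disjoint_coe.mpr hst) hadj).specRad_le ?_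
  rw [specRad_eq_sSup]
  exact le_csSup (Matrix.finite_spectrum _).bddAbove hmem

end SimpleGraph

theorem stmt17_general {V : Type*} [Fintype V]
    (G : SimpleGraph V) [DecidableRel G.Adj]
    (hbip : G.Colorable 2) (e : ℕ) (hcard : G.edgeFinset.card = e) :
    specRad G ≤ Real.sqrt (e : ℝ) ∧
    (specRad G = Real.sqrt (e : ℝ) ↔ ∃ S T : Set V, Disjoint S T ∧
      ∀ x y : V, G.Adj x y ↔ (x ∈ S ∧ y ∈ T) ∨ (x ∈ T ∧ y ∈ S)) := by
  classical
  subst hcard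
  obtain ⟨S, T, hST⟩ := SimpleGraph.IsBipartite.exists_isBipartiteWith hbip
  have h : G.IsBipartiteWith ↑S.toFinset ↑T.toFinset := by simpa using hST
  refine ⟨h.specRad_le, fun heq => ?_, fun ⟨S', T', hd, hadj⟩ => ?_⟩
  · obtain ⟨s, t, hst, hadj⟩ := h.exists_adj_iff_of_specRad_eq heq
    exact ⟨s, t, disjoint_coe.mpr hst, by simpa using hadj⟩
  · exact SimpleGraph.specRad_eq_sqrt_of_adj_iff (s := S'.toFinset) (t := T'.toFinset)
      (by simpa using hd) (by simpa using hadj)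

theorem stmt17 {V : Type*} [Fintype V] [DecidableEq V]
    (G : SimpleGraph V) [DecidableRel G.Adj]
    (hbip : G.Colorable 2) (e : ℕ) (hcard : G.edgeFinset.card = e) :
    specRad G ≤ Real.sqrt (e : ℝ) ∧
    (specRad G = Real.sqrt (e : ℝ) ↔ ∃ S T : Set V, Disjoint S T ∧
      ∀ x y : V, G.Adj x y ↔ (x ∈ S ∧ y ∈ T) ∨ (x ∈ T ∧ y ∈ S)) :=
  stmt17_general G hbip e hcard
end

section
/- Let G be a connected simple bipartite graph with bipartition (U,V) and degree sequences d_1 ≥ ... ≥ d_p on U and d'_1 ≥ ... ≥ d'_q on V. Then ρ(G) ≤ sqrt(d_1 · d'_1), with equality if and only if G is biregular (i.e., d_1 = d_p and d'_1 = d'_q). -/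
open Matrix Finset

set_option maxHeartbeats 1600000

lemma matrix_mem_spectrum_iff {n : Type*} [Fintype n] [DecidableEq n] (A : Matrix n n ℝ) (μ : ℝ) :
    μ ∈ spectrum ℝ A ↔ ∃ x : n → ℝ, x ≠ 0 ∧ A *ᵥ x = μ • x := by
  rw [← AlgEquiv.spectrum_eq (Matrix.toLinAlgEquiv' (R := ℝ) (n := n)) A,
    ← Module.End.hasEigenvalue_iff_mem_spectrum]
  constructor
  · intro h
    obtain ⟨x, hx, hx0⟩ := h.exists_hasEigenvector
    exact ⟨x, hx0, by simpa [Matrix.toLinAlgEquiv'_apply] using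
      Module.End.mem_eigenspace_iff.mp hx⟩
  · rintro ⟨x, hx0, hx⟩
    exact Module.End.hasEigenvalue_of_hasEigenvector
      ⟨Module.End.mem_eigenspace_iff.mpr (by simpa [Matrix.toLinAlgEquiv'_apply] using hx), hx0⟩

theorem stmt18 (p q : ℕ) (hp : 0 < p) (hq : 0 < q)
    (G : SimpleGraph (Fin p ⊕ Fin q)) [DecidableRel G.Adj]
    (hconn : G.Connected)
    (hL : ∀ i j : Fin p, ¬ G.Adj (Sum.inl i) (Sum.inl j))
    (hR : ∀ i j : Fin q, ¬ G.Adj (Sum.inr i) (Sum.inr j))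
    (hdU : ∀ i j : Fin p, i ≤ j → G.degree (Sum.inl j) ≤ G.degree (Sum.inl i))
    (hdV : ∀ i j : Fin q, i ≤ j → G.degree (Sum.inr j) ≤ G.degree (Sum.inr i)) :
    specRad G ≤ Real.sqrt ((G.degree (Sum.inl ⟨0, hp⟩) : ℝ)
        * (G.degree (Sum.inr ⟨0, hq⟩) : ℝ)) ∧
    (specRad G = Real.sqrt ((G.degree (Sum.inl ⟨0, hp⟩) : ℝ)
        * (G.degree (Sum.inr ⟨0, hq⟩) : ℝ)) ↔
      (G.degree (Sum.inl ⟨0, hp⟩) = G.degree (Sum.inl ⟨p - 1, by omega⟩) ∧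
       G.degree (Sum.inr ⟨0, hq⟩) = G.degree (Sum.inr ⟨q - 1, by omega⟩))) := by
  classical
  set A : Matrix (Fin p ⊕ Fin q) (Fin p ⊕ Fin q) ℝ := G.adjMatrix ℝ with hAdef
  have h0 : specRad G = sSup (spectrum ℝ A) := by
    unfold specRad
    congr!
  set u0 : Fin p ⊕ Fin q := Sum.inl ⟨0, hp⟩ with hu0
  set v0 : Fin p ⊕ Fin q := Sum.inr ⟨0, hq⟩ with hv0
  set D1 : ℝ := (G.degree u0 : ℝ) with hD1
  set D2 : ℝ := (G.degree v0 : ℝ) with hD2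
  -- degrees are positive
  have hdegpos : ∀ v, 0 < G.degree v := by
    intro v
    rw [SimpleGraph.degree_pos_iff_exists_adj]
    obtain ⟨w, hw⟩ : ∃ w : Fin p ⊕ Fin q, w ≠ v := by
      rcases v with i | j
      · exact ⟨Sum.inr ⟨0, hq⟩, by simp⟩
      · exact ⟨Sum.inl ⟨0, hp⟩, by simp⟩
    obtain ⟨W⟩ := hconn.preconnected v w
    cases W with
    | nil => exact absurd rfl hw
    | cons h _ => exact ⟨_, h⟩
  have hD1pos : 0 < D1 := by rw [hD1]; exact_mod_cast hdegpos u0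
  have hD2pos : 0 < D2 := by rw [hD2]; exact_mod_cast hdegpos v0
  have hUle : ∀ i : Fin p, G.degree (Sum.inl i) ≤ G.degree u0 :=
    fun i => hdU ⟨0, hp⟩ i (by simp [Fin.le_def])
  have hVle : ∀ j : Fin q, G.degree (Sum.inr j) ≤ G.degree v0 :=
    fun j => hdV ⟨0, hq⟩ j (by simp [Fin.le_def])
  -- pointwise eigen equation
  have heqgen : ∀ (μ : ℝ) (x : Fin p ⊕ Fin q → ℝ), A *ᵥ x = μ • x →
      ∀ u, μ * x u = ∑ w ∈ G.neighborFinset u, x w := by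
    intro μ x hx u
    have := congrFun hx u
    rw [hAdef, SimpleGraph.adjMatrix_mulVec_apply] at this
    simpa using this.symm
  -- key bound for any eigenvalue
  have key : ∀ μ : ℝ, μ ∈ spectrum ℝ A → |μ| ≤ Real.sqrt (D1 * D2) := by
    intro μ hμ
    obtain ⟨x, hx0, hx⟩ := (matrix_mem_spectrum_iff A μ).mp hμ
    obtain ⟨i0, -, hi0⟩ := Finset.exists_max_image Finset.univ
      (fun i : Fin p => |x (Sum.inl i)|) ⟨⟨0, hp⟩, mem_univ _⟩
    obtain ⟨j0, -, hj0⟩ := Finset.exists_max_image Finset.univ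
      (fun j : Fin q => |x (Sum.inr j)|) ⟨⟨0, hq⟩, mem_univ _⟩
    set m : ℝ := |x (Sum.inl i0)| with hm
    set M : ℝ := |x (Sum.inr j0)| with hM
    have hm0 : 0 ≤ m := abs_nonneg _
    have hM0 : 0 ≤ M := abs_nonneg _
    have heq := heqgen μ x hx
    have hU : ∀ i : Fin p, |μ| * |x (Sum.inl i)| ≤ (G.degree (Sum.inl i) : ℝ) * M := by
      intro i
      rw [← abs_mul, heq]
      calc |∑ w ∈ G.neighborFinset (Sum.inl i), x w|
          ≤ ∑ w ∈ G.neighborFinset (Sum.inl i), |x w| := Finset.abs_sum_le_sum_abs _ _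
        _ ≤ ∑ _w ∈ G.neighborFinset (Sum.inl i), M := by
            refine Finset.sum_le_sum fun w hw => ?_
            rcases w with a | b
            · exact absurd ((SimpleGraph.mem_neighborFinset _ _ _).mp hw) (hL i a)
            · exact hj0 b (mem_univ _)
        _ = (G.degree (Sum.inl i) : ℝ) * M := by
            rw [Finset.sum_const, SimpleGraph.card_neighborFinset_eq_degree, nsmul_eq_mul]
    have hV : ∀ j : Fin q, |μ| * |x (Sum.inr j)| ≤ (G.degree (Sum.inr j) : ℝ) * m := by
      intro j
      rw [← abs_mul, heq]
      calc |∑ w ∈ G.neighborFinset (Sum.inr j), x w|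
          ≤ ∑ w ∈ G.neighborFinset (Sum.inr j), |x w| := Finset.abs_sum_le_sum_abs _ _
        _ ≤ ∑ _w ∈ G.neighborFinset (Sum.inr j), m := by
            refine Finset.sum_le_sum fun w hw => ?_
            rcases w with a | b
            · exact hi0 a (mem_univ _)
            · exact absurd ((SimpleGraph.mem_neighborFinset _ _ _).mp hw) (hR j b)
        _ = (G.degree (Sum.inr j) : ℝ) * m := by
            rw [Finset.sum_const, SimpleGraph.card_neighborFinset_eq_degree, nsmul_eq_mul]
    have h1 : |μ| * m ≤ D1 * M := le_trans (hU i0)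
      (mul_le_mul_of_nonneg_right (by rw [hD1]; exact_mod_cast hUle i0) hM0)
    have h2 : |μ| * M ≤ D2 * m := le_trans (hV j0)
      (mul_le_mul_of_nonneg_right (by rw [hD2]; exact_mod_cast hVle j0) hm0)
    have hxne : 0 < m ∨ 0 < M := by
      by_contra hcon
      push_neg at hcon
      have hm' : m = 0 := le_antisymm hcon.1 hm0
      have hM' : M = 0 := le_antisymm hcon.2 hM0
      apply hx0
      funext w
      rcases w with a | b
      · have := hi0 a (mem_univ _)
        rw [hm'] at this
        simpa using le_antisymm this (abs_nonneg _)
      · have := hj0 b (mem_univ _)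
        rw [hM'] at this
        simpa using le_antisymm this (abs_nonneg _)
    apply Real.le_sqrt_of_sq_le
    rcases eq_or_lt_of_le hm0 with hmz | hmpos
    · rcases hxne with h | h
      · exact absurd hmz (by linarith)
      · have : |μ| * M ≤ 0 := by rw [← hmz] at h2; linarith [h2]
        have hμ0 : |μ| = 0 := by
          nlinarith [abs_nonneg μ]
        rw [sq_abs] at *
        nlinarith [sq_abs μ, hμ0]
    · rcases eq_or_lt_of_le hM0 with hMz | hMpos
      · have : |μ| * m ≤ 0 := by rw [← hMz] at h1; linarith [h1]
        have hμ0 : |μ| = 0 := by nlinarith [abs_nonneg μ]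
        nlinarith [sq_abs μ, hμ0]
      · have hprod : (|μ| * m) * (|μ| * M) ≤ (D1 * M) * (D2 * m) :=
          mul_le_mul h1 h2 (mul_nonneg (abs_nonneg μ) hM0) (mul_nonneg hD1pos.le hM0)
        nlinarith [sq_abs μ, mul_pos hmpos hMpos, hprod]
  -- spectrum facts
  have hherm : A.IsHermitian := by
    rw [Matrix.IsHermitian, Matrix.conjTranspose_eq_transpose_of_trivial]
    exact G.isSymm_adjMatrix
  have hne : (spectrum ℝ A).Nonempty := ⟨_, hherm.eigenvalues_mem_spectrum_real u0⟩
  have hfin : (spectrum ℝ A).Finite := Matrix.finite_spectrum A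
  have hbdd : BddAbove (spectrum ℝ A) := hfin.bddAbove
  have hle : specRad G ≤ Real.sqrt (D1 * D2) := by
    rw [h0]
    exact csSup_le hne fun μ hμ => (le_abs_self μ).trans (key μ hμ)
  refine ⟨hle, ?_, ?_⟩
  · -- equality → biregular
    intro hEq
    set μ0 : ℝ := Real.sqrt (D1 * D2) with hμ0def
    have hμ0pos : 0 < μ0 := Real.sqrt_pos.mpr (mul_pos hD1pos hD2pos)
    have hμmem : μ0 ∈ spectrum ℝ A := by
      have := hne.csSup_mem hfin
      rwa [← h0, hEq] at this
    obtain ⟨x, hx0, hx⟩ := (matrix_mem_spectrum_iff A μ0).mp hμmem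
    obtain ⟨i0, -, hi0⟩ := Finset.exists_max_image Finset.univ
      (fun i : Fin p => |x (Sum.inl i)|) ⟨⟨0, hp⟩, mem_univ _⟩
    obtain ⟨j0, -, hj0⟩ := Finset.exists_max_image Finset.univ
      (fun j : Fin q => |x (Sum.inr j)|) ⟨⟨0, hq⟩, mem_univ _⟩
    set m : ℝ := |x (Sum.inl i0)| with hm
    set M : ℝ := |x (Sum.inr j0)| with hM
    have hm0 : 0 ≤ m := abs_nonneg _
    have hM0 : 0 ≤ M := abs_nonneg _
    have heq := heqgen μ0 x hx
    -- chains
    have hUchain : ∀ i : Fin p,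
        μ0 * |x (Sum.inl i)| ≤ ∑ w ∈ G.neighborFinset (Sum.inl i), |x w| ∧
        ∑ w ∈ G.neighborFinset (Sum.inl i), |x w| ≤ (G.degree (Sum.inl i) : ℝ) * M := by
      intro i
      constructor
      · have : μ0 * |x (Sum.inl i)| = |μ0 * x (Sum.inl i)| := by
          rw [abs_mul, abs_of_pos hμ0pos]
        rw [this, heq]
        exact Finset.abs_sum_le_sum_abs _ _
      · calc ∑ w ∈ G.neighborFinset (Sum.inl i), |x w|
            ≤ ∑ _w ∈ G.neighborFinset (Sum.inl i), M := by
              refine Finset.sum_le_sum fun w hw => ?_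
              rcases w with a | b
              · exact absurd ((SimpleGraph.mem_neighborFinset _ _ _).mp hw) (hL i a)
              · exact hj0 b (mem_univ _)
          _ = (G.degree (Sum.inl i) : ℝ) * M := by
              rw [Finset.sum_const, SimpleGraph.card_neighborFinset_eq_degree, nsmul_eq_mul]
    have hVchain : ∀ j : Fin q,
        μ0 * |x (Sum.inr j)| ≤ ∑ w ∈ G.neighborFinset (Sum.inr j), |x w| ∧
        ∑ w ∈ G.neighborFinset (Sum.inr j), |x w| ≤ (G.degree (Sum.inr j) : ℝ) * m := by
      intro j
      constructor
      · have : μ0 * |x (Sum.inr j)| = |μ0 * x (Sum.inr j)| := by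
          rw [abs_mul, abs_of_pos hμ0pos]
        rw [this, heq]
        exact Finset.abs_sum_le_sum_abs _ _
      · calc ∑ w ∈ G.neighborFinset (Sum.inr j), |x w|
            ≤ ∑ _w ∈ G.neighborFinset (Sum.inr j), m := by
              refine Finset.sum_le_sum fun w hw => ?_
              rcases w with a | b
              · exact hi0 a (mem_univ _)
              · exact absurd ((SimpleGraph.mem_neighborFinset _ _ _).mp hw) (hR j b)
          _ = (G.degree (Sum.inr j) : ℝ) * m := by
              rw [Finset.sum_const, SimpleGraph.card_neighborFinset_eq_degree, nsmul_eq_mul]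
    have h1 : μ0 * m ≤ D1 * M := le_trans (le_trans (hUchain i0).1 (hUchain i0).2)
      (mul_le_mul_of_nonneg_right (by rw [hD1]; exact_mod_cast hUle i0) hM0)
    have h2 : μ0 * M ≤ D2 * m := le_trans (le_trans (hVchain j0).1 (hVchain j0).2)
      (mul_le_mul_of_nonneg_right (by rw [hD2]; exact_mod_cast hVle j0) hm0)
    have hxne : 0 < m ∨ 0 < M := by
      by_contra hcon
      push_neg at hcon
      have hm' : m = 0 := le_antisymm hcon.1 hm0
      have hM' : M = 0 := le_antisymm hcon.2 hM0
      apply hx0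
      funext w
      rcases w with a | b
      · have := hi0 a (mem_univ _)
        rw [hm'] at this
        simpa using le_antisymm this (abs_nonneg _)
      · have := hj0 b (mem_univ _)
        rw [hM'] at this
        simpa using le_antisymm this (abs_nonneg _)
    have hmpos : 0 < m := by
      rcases hxne with h | h
      · exact h
      · nlinarith
    have hMpos : 0 < M := by nlinarith
    have hμsq : μ0 ^ 2 = D1 * D2 := Real.sq_sqrt (mul_nonneg hD1pos.le hD2pos.le)
    have hprod : (μ0 * m) * (μ0 * M) ≤ (D1 * M) * (D2 * m) :=
      mul_le_mul h1 h2 (mul_nonneg hμ0pos.le hM0) (mul_nonneg hD1pos.le hM0)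
    have he1 : μ0 * m = D1 * M := by nlinarith [hprod, hμsq, mul_pos hμ0pos hMpos, mul_pos hμ0pos hmpos, mul_pos hmpos hMpos]
    have he2 : μ0 * M = D2 * m := by nlinarith [hprod, hμsq, mul_pos hμ0pos hMpos, mul_pos hμ0pos hmpos, mul_pos hmpos hMpos]
    -- local rigidity at maximizers
    have subU : ∀ i : Fin p, |x (Sum.inl i)| = m →
        G.degree (Sum.inl i) = G.degree u0 ∧
        ∀ w ∈ G.neighborFinset (Sum.inl i), |x w| = M := by
      intro i hi
      have c1 := (hUchain i).1
      have c2 := (hUchain i).2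
      rw [hi] at c1
      have c3 : (G.degree (Sum.inl i) : ℝ) * M ≤ D1 * M :=
        mul_le_mul_of_nonneg_right (by rw [hD1]; exact_mod_cast hUle i) hM0
      have e3 : (G.degree (Sum.inl i) : ℝ) * M = D1 * M := by linarith [he1]
      have hdeg : (G.degree (Sum.inl i) : ℝ) = D1 := by
        have := mul_right_cancel₀ (ne_of_gt hMpos) e3
        exact this
      constructor
      · rw [hD1] at hdeg; exact_mod_cast hdeg
      · have esum : ∑ w ∈ G.neighborFinset (Sum.inl i), |x w|
            = ∑ _w ∈ G.neighborFinset (Sum.inl i), M := by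
          have hub : ∑ _w ∈ G.neighborFinset (Sum.inl i), M
              = (G.degree (Sum.inl i) : ℝ) * M := by
            rw [Finset.sum_const, SimpleGraph.card_neighborFinset_eq_degree, nsmul_eq_mul]
          rw [hub]
          linarith [he1, c1, c2, e3]
        intro w hw
        refine (Finset.sum_eq_sum_iff_of_le ?_).mp esum w hw
        intro w' hw'
        rcases w' with a | b
        · exact absurd ((SimpleGraph.mem_neighborFinset _ _ _).mp hw') (hL i a)
        · exact hj0 b (mem_univ _)
    have subV : ∀ j : Fin q, |x (Sum.inr j)| = M →
        G.degree (Sum.inr j) = G.degree v0 ∧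
        ∀ w ∈ G.neighborFinset (Sum.inr j), |x w| = m := by
      intro j hj
      have c1 := (hVchain j).1
      have c2 := (hVchain j).2
      rw [hj] at c1
      have c3 : (G.degree (Sum.inr j) : ℝ) * m ≤ D2 * m :=
        mul_le_mul_of_nonneg_right (by rw [hD2]; exact_mod_cast hVle j) hm0
      have e3 : (G.degree (Sum.inr j) : ℝ) * m = D2 * m := by linarith [he2]
      have hdeg : (G.degree (Sum.inr j) : ℝ) = D2 :=
        mul_right_cancel₀ (ne_of_gt hmpos) e3
      constructor
      · rw [hD2] at hdeg; exact_mod_cast hdeg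
      · have esum : ∑ w ∈ G.neighborFinset (Sum.inr j), |x w|
            = ∑ _w ∈ G.neighborFinset (Sum.inr j), m := by
          have hub : ∑ _w ∈ G.neighborFinset (Sum.inr j), m
              = (G.degree (Sum.inr j) : ℝ) * m := by
            rw [Finset.sum_const, SimpleGraph.card_neighborFinset_eq_degree, nsmul_eq_mul]
          rw [hub]
          linarith [he2, c1, c2, e3]
        intro w hw
        refine (Finset.sum_eq_sum_iff_of_le ?_).mp esum w hw
        intro w' hw'
        rcases w' with a | b
        · exact hi0 a (mem_univ _)
        · exact absurd ((SimpleGraph.mem_neighborFinset _ _ _).mp hw') (hR j b)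
    -- propagate along the graph
    set P : Fin p ⊕ Fin q → Prop :=
      fun w => Sum.elim (fun i => |x (Sum.inl i)| = m) (fun j => |x (Sum.inr j)| = M) w with hP
    have hClosed : ∀ a b, G.Adj a b → P a → P b := by
      rintro (i | j) (i' | j') hadj hPa
      · exact absurd hadj (hL i i')
      · exact (subU i hPa).2 _ ((SimpleGraph.mem_neighborFinset _ _ _).mpr hadj)
      · exact (subV j hPa).2 _ ((SimpleGraph.mem_neighborFinset _ _ _).mpr hadj)
      · exact absurd hadj (hR j j')
    have hwalk : ∀ (a b : Fin p ⊕ Fin q) (W : G.Walk a b), P a → P b := by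
      intro a b W
      induction W with
      | nil => exact id
      | cons h _ ih => exact fun hPa => ih (hClosed _ _ h hPa)
    have hAll : ∀ w, P w := by
      intro w
      obtain ⟨W⟩ := hconn.preconnected (Sum.inl i0) w
      exact hwalk _ _ W rfl
    constructor
    · exact ((subU ⟨p - 1, by omega⟩ (hAll (Sum.inl ⟨p - 1, by omega⟩))).1).symm
    · exact ((subV ⟨q - 1, by omega⟩ (hAll (Sum.inr ⟨q - 1, by omega⟩))).1).symm
  · -- biregular → equality
    rintro ⟨hbU, hbV⟩
    have hconstU : ∀ i : Fin p, G.degree (Sum.inl i) = G.degree u0 := by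
      intro i
      have h1 := hUle i
      have h2 := hdU i ⟨p - 1, by omega⟩ (by rw [Fin.le_def]; exact Nat.le_pred_of_lt i.2)
      omega
    have hconstV : ∀ j : Fin q, G.degree (Sum.inr j) = G.degree v0 := by
      intro j
      have h1 := hVle j
      have h2 := hdV j ⟨q - 1, by omega⟩ (by rw [Fin.le_def]; exact Nat.le_pred_of_lt j.2)
      omega
    set x : Fin p ⊕ Fin q → ℝ :=
      Sum.elim (fun _ => Real.sqrt D1) (fun _ => Real.sqrt D2) with hxdef
    have hx0 : x ≠ 0 := by
      intro hcon
      have := congrFun hcon u0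
      simp only [hxdef, hu0, Sum.elim_inl, Pi.zero_apply] at this
      exact absurd this (ne_of_gt (Real.sqrt_pos.mpr hD1pos))
    have hs1 : Real.sqrt D1 * Real.sqrt D1 = D1 := Real.mul_self_sqrt hD1pos.le
    have hs2 : Real.sqrt D2 * Real.sqrt D2 = D2 := Real.mul_self_sqrt hD2pos.le
    have hsmul : Real.sqrt (D1 * D2) = Real.sqrt D1 * Real.sqrt D2 :=
      Real.sqrt_mul hD1pos.le D2
    have hx : A *ᵥ x = Real.sqrt (D1 * D2) • x := by
      funext u
      rw [hAdef, SimpleGraph.adjMatrix_mulVec_apply]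
      rcases u with i | j
      · have hconst : ∀ w ∈ G.neighborFinset (Sum.inl i), x w = Real.sqrt D2 := by
          intro w hw
          rcases w with a | b
          · exact absurd ((SimpleGraph.mem_neighborFinset _ _ _).mp hw) (hL i a)
          · simp [hxdef]
        rw [Finset.sum_congr rfl hconst, Finset.sum_const,
          SimpleGraph.card_neighborFinset_eq_degree, hconstU i, nsmul_eq_mul]
        simp only [Pi.smul_apply, hxdef, Sum.elim_inl, smul_eq_mul]
        rw [hsmul, ← hD1]
        linear_combination (-(Real.sqrt D2)) * hs1
      · have hconst : ∀ w ∈ G.neighborFinset (Sum.inr j), x w = Real.sqrt D1 := by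
          intro w hw
          rcases w with a | b
          · simp [hxdef]
          · exact absurd ((SimpleGraph.mem_neighborFinset _ _ _).mp hw) (hR j b)
        rw [Finset.sum_congr rfl hconst, Finset.sum_const,
          SimpleGraph.card_neighborFinset_eq_degree, hconstV j, nsmul_eq_mul]
        simp only [Pi.smul_apply, hxdef, Sum.elim_inr, smul_eq_mul]
        rw [hsmul, ← hD2]
        linear_combination (-(Real.sqrt D1)) * hs2
    have hmem : Real.sqrt (D1 * D2) ∈ spectrum ℝ A :=
      (matrix_mem_spectrum_iff A _).mpr ⟨x, hx0, hx⟩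
    have hge : Real.sqrt (D1 * D2) ≤ specRad G := by
      rw [h0]
      exact le_csSup hbdd hmem
    exact le_antisymm hle hge
end
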